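/- Let $I$ be an index set with $|I| = k$ even. Then $\mathrm{Pf}\,F_I = \frac{1}{k/2+1}\sum_{I = I'\sqcup I''}(-1)^{(I'I'')}\frac{(|I'|/2)!\,(|I''|/2)!}{(k/2)!}\,\mathrm{Pf}\,F_{I'}\,\mathrm{Pf}\,F_{I''}$, where the sum runs over all ordered decompositions of $I$ into two disjoint subsets $I', I''$ of even cardinalities (including empty subsets, with $\mathrm{Pf}\,F_{\emptyset} = 1$). -/

import Mathlib

open scoped BigOperators

/-- Index set `{-n, …, n}` for the split orthogonal Lie algebra `o_{2n+1}`. -/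
abbrev Idx (n : ℕ) : Type := {i : ℤ // i ∈ Finset.Icc (-(n : ℤ)) (n : ℤ)}

namespace Idx
/-- Negation on the index set. -/
def neg {n : ℕ} (i : Idx n) : Idx n :=
  ⟨-i.1, by have := i.2; simp only [Finset.mem_Icc] at *; omega⟩
end Idx

/-- Noncommutative pfaffian of `F` along an enumeration `e : Fin (2m) → Idx n`:
`Pf = 1/(m! 2^m) ∑_σ sgn σ · F_{-e(σ 1), e(σ 2)} ⋯ F_{-e(σ(2m-1)), e(σ(2m))}`. -/
noncomputable def PfEnum {A : Type*} [Ring A] [Algebra ℚ A] {n : ℕ}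
    (F : Idx n → Idx n → A) (m : ℕ) (e : Fin (2 * m) → Idx n) : A :=
  ((m.factorial : ℚ) * 2 ^ m)⁻¹ •
    ∑ σ : Equiv.Perm (Fin (2 * m)),
      (Equiv.Perm.sign σ : ℤ) •
        (List.ofFn fun t : Fin m =>
          F (Idx.neg (e (σ ⟨2 * t.1, by have := t.2; omega⟩)))
            (e (σ ⟨2 * t.1 + 1, by have := t.2; omega⟩))).prod

/-- Noncommutative pfaffian `Pf F_I` of an (even-cardinality) indexing set `I`,
using the increasing enumeration of `I`. -/
noncomputable def PfSet {A : Type*} [Ring A] [Algebra ℚ A] {n : ℕ}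
    (F : Idx n → Idx n → A) (I : Finset (Idx n)) : A :=
  PfEnum F (I.card / 2) fun t =>
    (I.orderIsoOfFin rfl ⟨t.1, by have := t.2; omega⟩).1

/-- The defining commutation relations of the generators `F_{ij}` of `o_N`. -/
def OrthRel {A : Type*} [Ring A] {n : ℕ} (F : Idx n → Idx n → A) : Prop :=
  ∀ i j k l : Idx n,
    F i j * F k l - F k l * F i j =
      (if k = j then F i l else 0) - (if i = l then F k j else 0)
        - (if Idx.neg k = i then F (Idx.neg j) l else 0)
        + (if Idx.neg l = j then F k (Idx.neg i) else 0)

/-- The skew-symmetry `F_{ij} = -F_{-j,-i}` of the generators. -/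
def OrthSkew {A : Type*} [Ring A] {n : ℕ} (F : Idx n → Idx n → A) : Prop :=
  ∀ i j : Idx n, F i j = - F (Idx.neg j) (Idx.neg i)

/-- Sign of an arrangement (list) of elements of a linearly ordered type:
`(-1)^(number of inversions)`. -/
def arrSign {ι : Type*} [LinearOrder ι] (l : List ι) : ℤ :=
  (-1) ^ (((Finset.univ : Finset (Fin l.length × Fin l.length)).filter
      fun p => p.1 < p.2 ∧ l.get p.2 < l.get p.1).card)

/-- Shuffle sign `(-1)^{(I'I'')}` of the permutation placing `I'` (in natural order)
before `I''` (in natural order). -/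
def shuffleSign {ι : Type*} [LinearOrder ι] (I' I'' : Finset ι) : ℤ :=
  arrSign (I'.sort (· ≤ ·) ++ I''.sort (· ≤ ·))

/-!
Expand every pfaffian as a signed sum over permutations and fix `j ≤ m`. A permutation `σ` of
the `2m` positions of `I` determines the set `I'` of indices it puts into the first `2j`
positions, and the permutations with a given `I'` form a coset `π (S_{2j} × S_{2m-2j})`, where
`π` lists the sorted `I'` before the sorted `I \ I'`, so that `sgn π = (-1)^{(I'I'')}`. The
pair product splits along the two blocks, hence the terms with `|I'| = 2j` add up to the full
unnormalised sum for `I`. As `j! (m-j)! / m!` times the normalisations `1 / (j! 2^j)` and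
`1 / ((m-j)! 2^(m-j))` of the two factors is the normalisation `1 / (m! 2^m)` of `Pf F_I`,
each of the `m + 1` values of `j` contributes exactly `Pf F_I`.
-/

open Equiv Equiv.Perm Finset

section Inversions

variable {ι : Type*} [LinearOrder ι]

def inversions {N : ℕ} (f : Fin N → ι) : Finset (Fin N × Fin N) :=
  {p | p.1 < p.2 ∧ f p.2 < f p.1}

lemma card_inversions_comp_cast {M N : ℕ} (h : M = N) (f : Fin N → ι) :
    #(inversions (f ∘ Fin.cast h)) = #(inversions f) := by
  subst h; rfl

lemma arrSign_ofFn {N : ℕ} (f : Fin N → ι) :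
    arrSign (List.ofFn f) = (-1) ^ #(inversions f) := by
  have hget : (List.ofFn f).get = f ∘ Fin.cast List.length_ofFn := funext (List.get_ofFn f)
  rw [arrSign, ← card_inversions_comp_cast List.length_ofFn, ← hget]
  rfl

lemma inversions_comp_of_strictMono {κ : Type*} [LinearOrder κ] {g : ι → κ}
    (hg : StrictMono g) {N : ℕ} (f : Fin N → ι) : inversions (g ∘ f) = inversions f := by
  simp only [inversions, Function.comp_apply, hg.lt_iff_lt]

lemma Equiv.Perm.sign_eq_neg_one_pow_card_inversions {N : ℕ} (σ : Perm (Fin N)) :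
    (sign σ : ℤ) = (-1) ^ #(inversions σ) := by
  have hinv : inversions σ = ({p | p.1 < p.2} : Finset (Fin N × Fin N)).filter
      fun p => ¬ σ p.1 < σ p.2 := by
    ext p
    simp only [inversions, mem_filter, mem_univ, true_and, not_lt]
    exact and_congr_right fun h => (σ.injective.ne h.ne').le_iff_lt.symm
  simp_rw [sign_eq_prod_prod_Ioi, ← filter_lt_eq_Ioi, prod_filter, ← Fintype.prod_prod_type',
    ← prod_filter, prod_ite, prod_const_one, one_mul, prod_const, hinv]
  push_cast
  rfl

end Inversions

lemma exists_perm_comp_eq_of_range_eq {Y : Type*} {N : ℕ} {e c : Fin N → Y}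
    (he : Function.Injective e) (hc : Function.Injective c) (h : Set.range c = Set.range e) :
    ∃ π : Perm (Fin N), e ∘ π = c :=
  ⟨(Equiv.ofInjective c hc).trans ((Equiv.setCongr h).trans (Equiv.ofInjective e he).symm),
    funext fun x => by simp [apply_ofInjective_symm]⟩

section Pairing

variable {X A : Type*} [Ring A]

def pairProd (P : X → X → A) (k : ℕ) (e : Fin (2 * k) → X) : A :=
  (List.ofFn fun t : Fin k =>
    P (e ⟨2 * t, by omega⟩) (e ⟨2 * t + 1, by omega⟩)).prod

def pfSum (P : X → X → A) (k : ℕ) (e : Fin (2 * k) → X) : A :=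
  ∑ σ : Perm (Fin (2 * k)), (sign σ : ℤ) • pairProd P k (e ∘ σ)

def blockEquiv (j l : ℕ) : Fin (2 * j) ⊕ Fin (2 * l) ≃ Fin (2 * (j + l)) :=
  finSumFinEquiv.trans (finCongr (Nat.mul_add 2 j l).symm)

variable {j l : ℕ}

def blockAppend (e' : Fin (2 * j) → X) (e'' : Fin (2 * l) → X) : Fin (2 * (j + l)) → X :=
  Sum.elim e' e'' ∘ (blockEquiv j l).symm

lemma blockAppend_comp_blockEquiv (e' : Fin (2 * j) → X) (e'' : Fin (2 * l) → X) :
    blockAppend e' e'' ∘ blockEquiv j l = Sum.elim e' e'' := by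
  simp [blockAppend, Function.comp_assoc]

@[simp]
lemma blockAppend_blockEquiv (e' : Fin (2 * j) → X) (e'' : Fin (2 * l) → X) (x) :
    blockAppend e' e'' (blockEquiv j l x) = Sum.elim e' e'' x := by
  simp [blockAppend]

lemma blockAppend_apply_of_lt (e' : Fin (2 * j) → X) (e'' : Fin (2 * l) → X) {i : ℕ}
    (hi : i < 2 * (j + l)) (h : i < 2 * j) : blockAppend e' e'' ⟨i, hi⟩ = e' ⟨i, h⟩ := by
  rw [show (⟨i, hi⟩ : Fin _) = blockEquiv j l (.inl ⟨i, h⟩) from Fin.ext rfl,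
    blockAppend_blockEquiv, Sum.elim_inl]

lemma blockAppend_apply_of_le (e' : Fin (2 * j) → X) (e'' : Fin (2 * l) → X) {i : ℕ}
    (hi : i < 2 * (j + l)) (h : 2 * j ≤ i) :
    blockAppend e' e'' ⟨i, hi⟩ = e'' ⟨i - 2 * j, by omega⟩ := by
  rw [show (⟨i, hi⟩ : Fin _) = blockEquiv j l (.inr ⟨i - 2 * j, by omega⟩) from
      Fin.ext (by simp [blockEquiv]; omega), blockAppend_blockEquiv, Sum.elim_inr]

lemma pairProd_blockAppend (P : X → X → A) (e' : Fin (2 * j) → X) (e'' : Fin (2 * l) → X) :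
    pairProd P (j + l) (blockAppend e' e'') = pairProd P j e' * pairProd P l e'' := by
  simp only [pairProd, List.ofFn_add, List.prod_append]
  congr 3 with t
  · rw [blockAppend_apply_of_lt, blockAppend_apply_of_lt]; rfl
  · rw [blockAppend_apply_of_le _ _ _ (by simp), blockAppend_apply_of_le _ _ _ (by simp; omega)]
    congr 2 <;> ext <;> simp <;> omega

lemma blockAppend_eq_append_comp_cast (e' : Fin (2 * j) → X) (e'' : Fin (2 * l) → X) :
    blockAppend e' e'' = Fin.append e' e'' ∘ Fin.cast (Nat.mul_add 2 j l) := by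
  funext x
  obtain ⟨y | y, rfl⟩ := (blockEquiv j l).surjective x <;>
    simp only [blockAppend_blockEquiv, Function.comp_apply] <;> simp [blockEquiv]

def blockPerm (σ' : Perm (Fin (2 * j))) (σ'' : Perm (Fin (2 * l))) : Perm (Fin (2 * (j + l))) :=
  (blockEquiv j l).permCongr (Perm.sumCongr σ' σ'')

lemma sign_blockPerm (σ' : Perm (Fin (2 * j))) (σ'' : Perm (Fin (2 * l))) :
    sign (blockPerm σ' σ'') = sign σ' * sign σ'' := by
  rw [blockPerm, sign_permCongr, sign_sumCongr]

lemma blockPerm_injective :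
    Function.Injective fun p : Perm (Fin (2 * j)) × Perm (Fin (2 * l)) => blockPerm p.1 p.2 :=
  (blockEquiv j l).permCongr.injective.comp (Perm.sumCongrHom_injective (α := Fin (2 * j)))

lemma blockAppend_comp_blockPerm (e' : Fin (2 * j) → X) (e'' : Fin (2 * l) → X)
    (σ' : Perm (Fin (2 * j))) (σ'' : Perm (Fin (2 * l))) :
    blockAppend e' e'' ∘ blockPerm σ' σ'' = blockAppend (e' ∘ σ') (e'' ∘ σ'') := by
  funext x
  obtain ⟨y, rfl⟩ := (blockEquiv j l).surjective x
  rcases y with y | y <;> simp [blockPerm, permCongr_apply]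

end Pairing

section Finsets

variable {X A : Type*} [LinearOrder X] [Ring A] {j l : ℕ}

def pfSumFinset (P : X → X → A) (k : ℕ) (s : Finset X) : A :=
  if h : #s = 2 * k then pfSum P k (s.orderEmbOfFin h) else 0

lemma pfSumFinset_of_card (P : X → X → A) {k : ℕ} {s : Finset X} (h : #s = 2 * k) :
    pfSumFinset P k s = pfSum P k (s.orderEmbOfFin h) :=
  dif_pos h

lemma Finset.sort_eq_ofFn_orderEmbOfFin (s : Finset X) {k : ℕ} (h : #s = k) :
    s.sort (· ≤ ·) = List.ofFn (s.orderEmbOfFin h) :=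
  List.ext_get (by simp [h]) fun i _ _ => by simp [orderEmbOfFin_apply]

lemma exists_perm_sorted_comp_eq_blockAppend {I I' : Finset X} (hsub : I' ⊆ I)
    (hI : #I = 2 * (j + l)) (hI' : #I' = 2 * j) (hI'' : #(I \ I') = 2 * l) :
    ∃ π : Perm (Fin (2 * (j + l))),
      ⇑(I.orderEmbOfFin hI) ∘ π =
          blockAppend (I'.orderEmbOfFin hI') ((I \ I').orderEmbOfFin hI'') ∧
        (sign π : ℤ) = shuffleSign I' (I \ I') := by
  set c := blockAppend (I'.orderEmbOfFin hI') ((I \ I').orderEmbOfFin hI'') with hc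
  have hc_inj : Function.Injective c := by
    refine ((I'.orderEmbOfFin hI').injective.sumElim ((I \ I').orderEmbOfFin hI'').injective
      fun a b hab => ?_).comp (blockEquiv j l).symm.injective
    have := (I \ I').orderEmbOfFin_mem hI'' b
    rw [← hab, mem_sdiff] at this
    exact this.2 (I'.orderEmbOfFin_mem hI' a)
  have hc_range : Set.range c = Set.range (I.orderEmbOfFin hI) := by
    rw [hc, blockAppend, EquivLike.range_comp, Set.Sum.elim_range]
    simp only [range_orderEmbOfFin, ← coe_union, union_sdiff_of_subset hsub]
  obtain ⟨π, hπ⟩ := exists_perm_comp_eq_of_range_eq (I.orderEmbOfFin hI).injective hc_inj hc_range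
  refine ⟨π, hπ, ?_⟩
  rw [sign_eq_neg_one_pow_card_inversions,
    ← inversions_comp_of_strictMono (I.orderEmbOfFin hI).strictMono, hπ, shuffleSign,
    sort_eq_ofFn_orderEmbOfFin I' hI', sort_eq_ofFn_orderEmbOfFin (I \ I') hI'',
    ← List.ofFn_fin_append, arrSign_ofFn, hc, blockAppend_eq_append_comp_cast,
    card_inversions_comp_cast]

theorem sum_powersetCard_shuffleSign_smul_pfSumFinset_mul (P : X → X → A) {I : Finset X}
    (hI : #I = 2 * (j + l)) :
    ∑ I' ∈ I.powersetCard (2 * j),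
        shuffleSign I' (I \ I') • (pfSumFinset P j I' * pfSumFinset P l (I \ I')) =
      pfSumFinset P (j + l) I := by
  have hmem (I' : I.powersetCard (2 * j)) := mem_powersetCard.1 I'.2
  have hcompl (I' : I.powersetCard (2 * j)) : #(I \ I'.1) = 2 * l := by
    rw [card_sdiff_of_subset (hmem I').1, hI, (hmem I').2]; omega
  choose π hπ hsign using fun I' : I.powersetCard (2 * j) =>
    exists_perm_sorted_comp_eq_blockAppend (hmem I').1 hI (hmem I').2 (hcompl I')
  set e := I.orderEmbOfFin hI
  let Φ : (Σ _ : I.powersetCard (2 * j), Perm (Fin (2 * j)) × Perm (Fin (2 * l))) →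
      Perm (Fin (2 * (j + l))) := fun x => π x.1 * blockPerm x.2.1 x.2.2
  have hΦ_comp (x) : ⇑e ∘ Φ x = blockAppend (x.1.1.orderEmbOfFin (hmem x.1).2 ∘ x.2.1)
      ((I \ x.1.1).orderEmbOfFin (hcompl x.1) ∘ x.2.2) := by
    rw [coe_mul, ← Function.comp_assoc, hπ, blockAppend_comp_blockPerm]
  have hΦ_inj : Function.Injective Φ := by
    have hleft (x) : Set.range (⇑e ∘ Φ x ∘ blockEquiv j l ∘ Sum.inl) = x.1.1 := by
      rw [← Function.comp_assoc, hΦ_comp, ← Function.comp_assoc, blockAppend_comp_blockEquiv,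
        Sum.elim_comp_inl, EquivLike.range_comp, range_orderEmbOfFin]
    rintro ⟨I', p⟩ ⟨J', q⟩ h
    obtain rfl : I' = J' :=
      Subtype.ext (coe_inj.1 ((hleft ⟨I', p⟩).symm.trans (h ▸ hleft ⟨J', q⟩)))
    obtain rfl : p = q := blockPerm_injective (mul_left_cancel h)
    rfl
  have hΦ : Function.Bijective Φ := by
    rw [Fintype.bijective_iff_injective_and_card]
    refine ⟨hΦ_inj, ?_⟩
    simp only [Fintype.card_sigma, Fintype.card_prod, Fintype.card_perm, Fintype.card_fin,
      sum_const, card_univ, Fintype.card_coe, card_powersetCard, hI, smul_eq_mul]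
    rw [← mul_assoc, show 2 * l = 2 * (j + l) - 2 * j by omega,
      Nat.choose_mul_factorial_mul_factorial (by omega)]
  rw [pfSumFinset_of_card P hI, pfSum, ← Fintype.sum_bijective Φ hΦ _ _ (fun _ => rfl),
    Fintype.sum_sigma, ← sum_coe_sort]
  refine Fintype.sum_congr _ _ fun I' => ?_
  rw [pfSumFinset_of_card P (hmem I').2, pfSumFinset_of_card P (hcompl I'), pfSum, pfSum,
    sum_mul_sum, ← Fintype.sum_prod_type', smul_sum]
  refine Fintype.sum_congr _ _ fun p => ?_
  rw [hΦ_comp, pairProd_blockAppend, smul_mul_smul_comm, smul_smul]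
  simp only [Φ, Perm.sign_mul, sign_blockPerm, Units.val_mul, hsign]

end Finsets

section Pfaffian

variable {A : Type*} [Ring A] [Algebra ℚ A] {n : ℕ}

lemma PfSet_eq_smul_pfSumFinset (F : Idx n → Idx n → A) {s : Finset (Idx n)} {k : ℕ}
    (h : #s = 2 * k) :
    PfSet F s = (k.factorial * 2 ^ k : ℚ)⁻¹ • pfSumFinset (fun i j => F i.neg j) k s := by
  obtain rfl : k = #s / 2 := by omega
  rw [pfSumFinset_of_card _ h]
  rfl

lemma sum_powersetCard_smul_PfSet_mul (F : Idx n → Idx n → A) {I : Finset (Idx n)} {j m : ℕ}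
    (hI : #I = 2 * m) (hj : j ≤ m) :
    ∑ I' ∈ I.powersetCard (2 * j), ((j.factorial * (m - j).factorial : ℚ) / m.factorial) •
        (shuffleSign I' (I \ I') • (PfSet F I' * PfSet F (I \ I'))) =
      PfSet F I := by
  obtain ⟨l, rfl⟩ := Nat.exists_eq_add_of_le hj
  rw [PfSet_eq_smul_pfSumFinset F hI, ← sum_powersetCard_shuffleSign_smul_pfSumFinset_mul _ hI,
    smul_sum]
  refine sum_congr rfl fun I' hI' => ?_
  obtain ⟨hsub, hI'⟩ := mem_powersetCard.1 hI'
  have hI'' : #(I \ I') = 2 * l := by rw [card_sdiff_of_subset hsub]; omega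
  rw [PfSet_eq_smul_pfSumFinset F hI', PfSet_eq_smul_pfSumFinset F hI'', smul_mul_smul_comm,
    smul_comm, smul_smul, smul_comm]
  congr 2
  rw [Nat.add_sub_cancel_left, pow_add]
  field_simp

end Pfaffian

theorem statement9_general {A : Type*} [Ring A] [Algebra ℚ A] (n : ℕ)
    (F : Idx n → Idx n → A) (I : Finset (Idx n)) (m : ℕ) (hI : I.card = 2 * m) :
    PfSet F I =
      ((m : ℚ) + 1)⁻¹ •
        ∑ I' ∈ I.powerset.filter fun s => Even s.card,
          (((I'.card / 2).factorial * ((I \ I').card / 2).factorial : ℚ) / (m.factorial : ℚ)) •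
            ((shuffleSign I' (I \ I') : ℤ) • (PfSet F I' * PfSet F (I \ I'))) := by
  have hmaps : ∀ I' ∈ I.powerset.filter fun s => Even s.card, I'.card / 2 ∈ range (m + 1) := by
    intro I' hI'
    have := card_le_card (mem_powerset.1 (mem_filter.1 hI').1)
    rw [mem_range]; omega
  have hfiber (j : ℕ) : (I.powerset.filter fun s => Even s.card).filter (fun s => s.card / 2 = j) =
      I.powersetCard (2 * j) := by
    rw [filter_filter, powersetCard_eq_filter]
    refine filter_congr fun s _ => ?_
    rw [Nat.even_iff]; omega
  rw [← sum_fiberwise_of_maps_to hmaps, sum_congr rfl (g := fun _ => PfSet F I), sum_const,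
    card_range, ← Nat.cast_smul_eq_nsmul ℚ, smul_smul, Nat.cast_succ,
    inv_mul_cancel₀ (by positivity), one_smul]
  intro j hj
  rw [hfiber, ← sum_powersetCard_smul_PfSet_mul F hI (Nat.lt_succ_iff.1 (mem_range.1 hj))]
  refine sum_congr rfl fun I' hI' => ?_
  obtain ⟨hsub, hI'⟩ := mem_powersetCard.1 hI'
  rw [card_sdiff_of_subset hsub, hI, hI', Nat.mul_div_cancel_left _ two_pos, ← Nat.mul_sub,
    Nat.mul_div_cancel_left _ two_pos]

/-- the summation formula
`Pf F_I = 1/(k/2+1) ∑_{I = I'⊔I''} (-1)^{(I'I'')} (|I'|/2)!(|I''|/2)!/(k/2)! Pf F_{I'} Pf F_{I''}`,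
the sum running over all ordered decompositions of `I` into two disjoint subsets of even
cardinality (including empty ones; `Pf F_∅ = 1`). -/
theorem statement9 {A : Type*} [Ring A] [Algebra ℚ A] (n : ℕ)
    (F : Idx n → Idx n → A) (hrel : OrthRel F) (hskew : OrthSkew F)
    (I : Finset (Idx n)) (m : ℕ) (hI : I.card = 2 * m) :
    PfSet F I =
      ((m : ℚ) + 1)⁻¹ •
        ∑ I' ∈ I.powerset.filter fun s => Even s.card,
          (((I'.card / 2).factorial * ((I \ I').card / 2).factorial : ℚ) / (m.factorial : ℚ)) •
            ((shuffleSign I' (I \ I') : ℤ) • (PfSet F I' * PfSet F (I \ I'))) :=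
  statement9_general n F I m hI
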